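/- arXiv:1409.0231 — 4 statements merged into one kernel-verified Lean document; each statement's English description precedes it below -/
import Mathlib

section
/- Let p be a prime of the form p = u² + 64 with u ≡ 1 (mod 4), and let A be the Neumann–Setzer elliptic curve y² + xy = x³ + ((u−1)/4)x² + 4x + u. Then the trace of Frobenius at 2 satisfies a₂ = −1 if p ≡ 1 (mod 16) (equivalently u ≡ 1 (mod 8)), and a₂ = 1 if p ≡ 9 (mod 16) (equivalently u ≡ 5 (mod 8)). -/
/-! The curve `y² + xy = x³ + a x² + 4x + u` reduces modulo 2 to `y² + xy = x³ + a x² + 1`,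
so only the parity of `a = (u - 1)/4`, i.e. `u mod 8`, matters. Since `u ≡ 1 (mod 4)` gives
`u² ≡ 2u - 1 (mod 16)`, that parity is read off from `p mod 16`. The two possible reductions have
`4` and `2` points over `𝔽₂`. -/

namespace WeierstrassCurve.Affine

variable {R : Type*} [CommRing R] (W : WeierstrassCurve.Affine R)

instance [DecidableEq R] (x y : R) : Decidable (W.Equation x y) :=
  decidable_of_iff _ (W.equation_iff x y).symm

instance [DecidableEq R] (x y : R) : Decidable (W.Nonsingular x y) :=
  decidable_of_iff _ (W.nonsingular_iff' x y).symm

lemma natCard_point [Finite R] :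
    Nat.card W.Point = Nat.card {xy : R × R // W.Nonsingular xy.1 xy.2} + 1 :=
  (Nat.card_congr (nonsingularPointEquiv W)).trans Finite.card_option

lemma natCard_point_zmod_two_a₂_zero :
    Nat.card (⟨1, 0, 0, 0, 1⟩ : WeierstrassCurve (ZMod 2)).toAffine.Point = 4 := by
  rw [natCard_point, Nat.card_eq_fintype_card]
  decide

lemma natCard_point_zmod_two_a₂_one :
    Nat.card (⟨1, 1, 0, 0, 1⟩ : WeierstrassCurve (ZMod 2)).toAffine.Point = 2 := by
  rw [natCard_point, Nat.card_eq_fintype_card]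
  decide

end WeierstrassCurve.Affine

lemma WeierstrassCurve.map_zmod_two_of_odd (a u : ℤ) (hu : u % 2 = 1) :
    (⟨1, a, 0, 4, u⟩ : WeierstrassCurve ℤ).map (Int.castRingHom (ZMod 2)) = ⟨1, a, 0, 0, 1⟩ := by
  have hu' : (u : ZMod 2) = 1 := by
    rw [← Int.cast_one, ZMod.intCast_eq_intCast_iff']
    omega
  ext <;> simp [WeierstrassCurve.map, hu']
  decide

lemma Int.sq_emod_sixteen_of_emod_four_eq_one {u : ℤ} (hu : u % 4 = 1) :
    u ^ 2 % 16 = (2 * u - 1) % 16 := by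
  obtain ⟨k, rfl⟩ : ∃ k, u = 4 * k + 1 := ⟨u / 4, by omega⟩
  have hexpand : (4 * k + 1) ^ 2 = 16 * k ^ 2 + 2 * (4 * k + 1) - 1 := by ring
  omega

theorem stmt_5_general (u : ℤ) (hu : u % 4 = 1) :
    ((u ^ 2 + 64) % 16 = 1 →
      (2 : ℤ) + 1 - (Nat.card (((⟨1, (u - 1) / 4, 0, 4, u⟩ : WeierstrassCurve ℤ).map
        (Int.castRingHom (ZMod 2))).toAffine.Point) : ℤ) = -1) ∧
    ((u ^ 2 + 64) % 16 = 9 →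
      (2 : ℤ) + 1 - (Nat.card (((⟨1, (u - 1) / 4, 0, 4, u⟩ : WeierstrassCurve ℤ).map
        (Int.castRingHom (ZMod 2))).toAffine.Point) : ℤ) = 1) := by
  have hsq := Int.sq_emod_sixteen_of_emod_four_eq_one hu
  rw [WeierstrassCurve.map_zmod_two_of_odd _ _ (by omega), ← ZMod.intCast_mod ((u - 1) / 4)]
  refine ⟨fun hp => ?_, fun hp => ?_⟩
  · rw [show (u - 1) / 4 % ((2 : ℕ) : ℤ) = 0 by omega, Int.cast_zero,
      WeierstrassCurve.Affine.natCard_point_zmod_two_a₂_zero]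
    norm_num
  · rw [show (u - 1) / 4 % ((2 : ℕ) : ℤ) = 1 by omega, Int.cast_one,
      WeierstrassCurve.Affine.natCard_point_zmod_two_a₂_one]
    norm_num

/-- let `p = u² + 64` be prime with `u ≡ 1 (mod 4)` and let `A` be the
Neumann–Setzer curve `y² + xy = x³ + ((u-1)/4)x² + 4x + u`.  Then the trace of Frobenius
at 2, `a₂ = 2 + 1 - #A(𝔽₂)`, equals `-1` if `p ≡ 1 (mod 16)` and `1` if `p ≡ 9 (mod 16)`. -/
theorem stmt_5 (u : ℤ) (hu : u % 4 = 1) (hp : Prime (u ^ 2 + 64)) :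
    ((u ^ 2 + 64) % 16 = 1 →
      (2 : ℤ) + 1 - (Nat.card (((⟨1, (u - 1) / 4, 0, 4, u⟩ : WeierstrassCurve ℤ).map
        (Int.castRingHom (ZMod 2))).toAffine.Point) : ℤ) = -1) ∧
    ((u ^ 2 + 64) % 16 = 9 →
      (2 : ℤ) + 1 - (Nat.card (((⟨1, (u - 1) / 4, 0, 4, u⟩ : WeierstrassCurve ℤ).map
        (Int.castRingHom (ZMod 2))).toAffine.Point) : ℤ) = 1) :=
  stmt_5_general u hu
end

section
/- Let p = u² + 64 be prime with u ≡ 1 (mod 4), M a squarefree odd integer prime to p, and consider the homogeneous space C_d : d w² = 4p − ((M/d) z² − 2u)² for a squarefree divisor-class d of M. If q is an odd prime dividing M with q ∤ d and C_d has a ℚ_q-rational point, and q ≡ 1 (mod 4), then d is a square modulo q. -/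
/-!
Put `s = (M/d) z²`. The curve becomes `d w² = 256 - s (s - 4u)`, and since `q` divides `M/d`
exactly once, `v_q(s) = 1 + 2 v_q(z)` is odd, so `‖s‖ ≠ 1`. If `‖s‖ < 1` then `d w² ≡ 16²`;
if `‖s‖ > 1` then `d (w/s)² ≡ -1`, a square because `q ≡ 1 (mod 4)`.
-/

open IsUltrametricDist

lemma Int.exists_ediv_eq_mul_not_dvd {M d q : ℤ} (hq : Prime q) (hM : Squarefree M)
    (hdM : d ∣ M) (hqM : q ∣ M) (hqd : ¬ q ∣ d) : ∃ k, M / d = q * k ∧ ¬ q ∣ k := by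
  obtain ⟨e, rfl⟩ := hdM
  have hd : d ≠ 0 := by rintro rfl; simp at hM
  obtain ⟨k, rfl⟩ := (hq.dvd_or_dvd hqM).resolve_left hqd
  refine ⟨k, Int.mul_ediv_cancel_left _ hd, fun ⟨c, hc⟩ => hq.not_isUnit (hM q ⟨d * c, ?_⟩)⟩
  rw [hc]; ring

lemma Nat.Prime.not_intCast_dvd_two_pow {q : ℕ} (hq : q.Prime) (hq2 : q ≠ 2) (n : ℕ) :
    ¬ (q : ℤ) ∣ 2 ^ n := fun h =>
  hq2 <| (Nat.prime_dvd_prime_iff_eq hq Nat.prime_two).mp <|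
    hq.dvd_of_dvd_pow (n := n) (by exact_mod_cast h)

namespace Padic

variable {q : ℕ} [Fact q.Prime]

lemma norm_intCast_eq_one_of_not_dvd {k : ℤ} (hk : ¬ (q : ℤ) ∣ k) : ‖(k : ℚ_[q])‖ = 1 :=
  (norm_int_le_one k).eq_of_not_lt (mt norm_intCast_lt_one_iff.mp hk)

lemma norm_intCast_natCast_mul {k : ℤ} (hk : ¬ (q : ℤ) ∣ k) :
    ‖((q * k : ℤ) : ℚ_[q])‖ = (q : ℝ)⁻¹ := by
  rw [Int.cast_mul, norm_mul, Int.cast_natCast, norm_p, norm_intCast_eq_one_of_not_dvd hk,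
    mul_one]

lemma norm_mul_sq_ne_one {e z : ℚ_[q]} (he : ‖e‖ = (q : ℝ)⁻¹) : ‖e * z ^ 2‖ ≠ 1 := by
  rcases eq_or_ne z 0 with rfl | hz
  · simp
  have hq : (1 : ℝ) < q := mod_cast (Fact.out : q.Prime).one_lt
  rw [norm_mul, norm_pow, he, norm_eq_zpow_neg_valuation hz, ← zpow_natCast, ← zpow_mul,
    ← zpow_neg_one, ← zpow_add₀ (by positivity), Ne,
    zpow_eq_one_iff_right₀ (by positivity) hq.ne']
  omega

lemma norm_mul_sub_lt_one {s t : ℚ_[q]} (hs : ‖s‖ < 1) (ht : ‖t‖ ≤ 1) :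
    ‖s * (s - t)‖ < 1 := by
  rw [norm_mul, sub_eq_add_neg]
  refine mul_lt_one_of_nonneg_of_lt_one_left (norm_nonneg _) hs ?_
  exact (norm_add_le_max _ _).trans (max_le hs.le (by rwa [norm_neg]))

lemma norm_div_add_div_lt_one {s a t : ℚ_[q]} (hs : 1 < ‖s‖) (ha : ‖a‖ ≤ 1) (ht : ‖t‖ ≤ 1) :
    ‖(a / s + t) / s‖ < 1 := by
  have hs₀ : 0 < ‖s‖ := one_pos.trans hs
  rw [norm_div, div_lt_one hs₀]
  refine lt_of_le_of_lt ((norm_add_le_max _ _).trans (max_le ?_ ht)) hs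
  rw [norm_div, div_le_one hs₀]
  exact ha.trans hs.le

theorem isSquare_intCast_of_norm_mul_sq_sub_lt_one {d c : ℤ} {y : ℚ_[q]}
    (hc : ¬ (q : ℤ) ∣ c) (hcsq : IsSquare (c : ZMod q)) (h : ‖d * y ^ 2 - c‖ < 1) :
    IsSquare (d : ZMod q) := by
  by_cases hd : (q : ℤ) ∣ d
  · rw [(ZMod.intCast_zmod_eq_zero_iff_dvd d q).mpr hd]
    exact ⟨0, (mul_zero 0).symm⟩
  have hdy : ‖(d : ℚ_[q]) * y ^ 2‖ = 1 := by
    have := norm_add_eq_max_of_norm_ne_norm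
      (h.trans_eq (norm_intCast_eq_one_of_not_dvd hc).symm).ne
    rwa [sub_add_cancel, norm_intCast_eq_one_of_not_dvd hc, max_eq_right h.le] at this
  have hy : ‖y‖ = 1 := by
    rwa [norm_mul, norm_intCast_eq_one_of_not_dvd hd, one_mul, norm_pow,
      pow_eq_one_iff_of_nonneg (norm_nonneg y) two_ne_zero] at hdy
  set Y : ℤ_[q] := ⟨y, hy.le⟩
  have hY : PadicInt.toZMod Y ≠ 0 :=
    ((PadicInt.isUnit_iff.mpr hy).map PadicInt.toZMod).ne_zero
  have hred : PadicInt.toZMod ((d : ℤ_[q]) * Y ^ 2 - (c : ℤ_[q])) = 0 := by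
    rw [← RingHom.mem_ker, PadicInt.ker_toZMod, IsLocalRing.mem_maximalIdeal,
      PadicInt.mem_nonunits]
    rwa [PadicInt.norm_def, PadicInt.coe_sub, PadicInt.coe_mul, PadicInt.coe_pow,
      PadicInt.coe_intCast, PadicInt.coe_intCast]
  rw [map_sub, map_mul, map_pow, map_intCast, map_intCast, sub_eq_zero] at hred
  rw [eq_div_of_mul_eq (pow_ne_zero 2 hY) hred]
  exact hcsq.div (.sq _)

end Padic

theorem stmt_11_general (u M d : ℤ) (hMsq : Squarefree M)
    (hdM : d ∣ M)
    (q : ℕ) [Fact q.Prime] (hq1 : q % 4 = 1)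
    (hqM : (q : ℤ) ∣ M) (hqd : ¬ ((q : ℤ) ∣ d))
    (hpt : ∃ w z : ℚ_[q], (d : ℚ_[q]) * w ^ 2 =
      4 * ((u : ℚ_[q]) ^ 2 + 64) - (((M / d : ℤ) : ℚ_[q]) * z ^ 2 - 2 * (u : ℚ_[q])) ^ 2) :
    IsSquare ((d : ZMod q)) := by
  obtain ⟨w, z, hwz⟩ := hpt
  obtain ⟨k, hk, hqk⟩ := Int.exists_ediv_eq_mul_not_dvd
    (Nat.prime_iff_prime_int.mp Fact.out) hMsq hdM hqM hqd
  set s : ℚ_[q] := ((M / d : ℤ) : ℚ_[q]) * z ^ 2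
  have hs : ‖s‖ ≠ 1 := Padic.norm_mul_sq_ne_one (hk ▸ Padic.norm_intCast_natCast_mul hqk)
  have hcurve : (d : ℚ_[q]) * w ^ 2 = 256 - s * (s - 4 * u) := by rw [hwz]; ring
  have h4u : ‖4 * (u : ℚ_[q])‖ ≤ 1 := by exact_mod_cast Padic.norm_int_le_one (4 * u)
  have hq2 : q ≠ 2 := by rintro rfl; simp at hq1
  rcases hs.lt_or_gt with hs | hs
  · refine Padic.isSquare_intCast_of_norm_mul_sq_sub_lt_one (c := 2 ^ 8) (y := w)
      ((Fact.out : q.Prime).not_intCast_dvd_two_pow hq2 8) ⟨16, by norm_num⟩ ?_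
    rw [hcurve, show ((2 ^ 8 : ℤ) : ℚ_[q]) = 256 by norm_num, sub_sub_cancel_left, norm_neg]
    exact Padic.norm_mul_sub_lt_one hs h4u
  · have hs₀ : s ≠ 0 := norm_pos_iff.mp (one_pos.trans hs)
    refine Padic.isSquare_intCast_of_norm_mul_sq_sub_lt_one (c := -1) (y := w / s)
      (by simp [Int.natCast_dvd, (Fact.out : q.Prime).ne_one])
      (by push_cast; exact ZMod.exists_sq_eq_neg_one_iff.mpr (by omega)) ?_
    have hy : (d : ℚ_[q]) * (w / s) ^ 2 - (-1 : ℤ) = (256 / s + 4 * u) / s := by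
      rw [div_pow, ← mul_div_assoc, hcurve]; field_simp; ring
    rw [hy]
    exact Padic.norm_div_add_div_lt_one hs (by exact_mod_cast Padic.norm_int_le_one 256) h4u

/-- let `p = u² + 64` be prime, `M` squarefree odd and prime to `p`, and
`C_d : d w² = 4p - ((M/d) z² - 2u)²` the homogeneous space attached to a divisor `d` of `M`.
If `q` is an odd prime dividing `M` with `q ∤ d` and `q ≡ 1 (mod 4)`, and `C_d` has a
`ℚ_q`-rational point, then `d` is a square modulo `q`. -/
theorem stmt_11 (u M d : ℤ) (hp : Prime (u ^ 2 + 64))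
    (hModd : Odd M) (hMsq : Squarefree M) (hMp : IsCoprime M (u ^ 2 + 64))
    (hdM : d ∣ M)
    (q : ℕ) [Fact q.Prime] (hqodd : Odd q) (hq1 : q % 4 = 1)
    (hqM : (q : ℤ) ∣ M) (hqd : ¬ ((q : ℤ) ∣ d))
    (hpt : ∃ w z : ℚ_[q], (d : ℚ_[q]) * w ^ 2 =
      4 * ((u : ℚ_[q]) ^ 2 + 64) - (((M / d : ℤ) : ℚ_[q]) * z ^ 2 - 2 * (u : ℚ_[q])) ^ 2) :
    IsSquare ((d : ZMod q)) :=
  stmt_11_general u M d hMsq hdM q hq1 hqM hqd hpt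
end

section
/- Let m > 1 be an odd squarefree integer with r prime factors, and for a divisor n of m let r(n) denote the number of prime factors of n. Suppose x_m and integers x_n, indexed by the divisors n of m with 1 ≤ r(n) < r, satisfy ord₂(x_n) = r(n) − 1 for all such n, and ord₂(x_m + ∑_{d=1}^{r−1} 2^{r−d} ∑_{n ∣ m, r(n)=d} x_n) = r − 1. Then ord₂(x_m) = r − 1. -/
open Finset

private lemma two_pow_fac {z : ℤ} (hz : z ≠ 0) {v : ℕ} (hv : padicValInt 2 z = v) :
    ∃ u : ℤ, Odd u ∧ z = 2 ^ v * u := by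
  have h1 : (2:ℤ) ^ v ∣ z := by
    have := padicValInt_dvd (p := 2) z
    rw [hv] at this; exact_mod_cast this
  obtain ⟨u, hu⟩ := h1
  refine ⟨u, ?_, hu⟩
  rw [← Int.not_even_iff_odd]
  rintro ⟨w, hw⟩
  subst hw
  have h2 : ((2:ℕ):ℤ) ^ (v+1) ∣ z := ⟨w, by rw [hu]; push_cast; ring⟩
  rcases (padicValInt_dvd_iff (p := 2) (v+1) z).1 h2 with h | h
  · exact hz h
  · omega

/-- let `m > 1` be an odd squarefree integer with `r` prime factors and
`x : ℕ → ℤ` (indexed by the divisors of `m`, thought of as the values `S'_n/Ω⁺`) such that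
`ord₂(x n) = r(n) - 1` for every divisor `n` of `m` with `1 ≤ r(n) < r`.  If
`ord₂(x m + ∑_{d=1}^{r-1} 2^(r-d) ∑_{n ∣ m, r(n) = d} x n) = r - 1`, then
`ord₂(x m) = r - 1`. -/
theorem stmt_17 (m : ℕ) (hm : 1 < m) (hodd : Odd m) (hsq : Squarefree m)
    (x : ℕ → ℤ)
    (hx : ∀ n ∈ m.divisors, 1 ≤ n.primeFactors.card →
      n.primeFactors.card < m.primeFactors.card →
      x n ≠ 0 ∧ padicValInt 2 (x n) = n.primeFactors.card - 1)
    (htot : x m + ∑ d ∈ Finset.Icc 1 (m.primeFactors.card - 1),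
        2 ^ (m.primeFactors.card - d) *
          ∑ n ∈ m.divisors.filter (fun n => n.primeFactors.card = d), x n ≠ 0)
    (hval : padicValInt 2 (x m + ∑ d ∈ Finset.Icc 1 (m.primeFactors.card - 1),
        2 ^ (m.primeFactors.card - d) *
          ∑ n ∈ m.divisors.filter (fun n => n.primeFactors.card = d), x n) =
      m.primeFactors.card - 1) :
    padicValInt 2 (x m) = m.primeFactors.card - 1 := by
  classical
  set r := m.primeFactors.card with hr
  have hm0 : m ≠ 0 := by omega
  have hr1 : 1 ≤ r := Finset.card_pos.2 (Nat.nonempty_primeFactors.2 hm)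
  set D := m.divisors.filter (fun n => n.primeFactors.card ∈ Finset.Icc 1 (r-1)) with hD
  set T := ∑ d ∈ Finset.Icc 1 (r - 1),
        (2:ℤ) ^ (r - d) *
          ∑ n ∈ m.divisors.filter (fun n => n.primeFactors.card = d), x n with hTdef
  -- Step A : rewrite T as a single sum
  have hTA : T = ∑ n ∈ D, 2 ^ (r - n.primeFactors.card) * x n := by
    rw [hD, hTdef, ← Finset.sum_fiberwise_eq_sum_filter m.divisors (Finset.Icc 1 (r-1))
      (fun n => n.primeFactors.card) (fun n => (2:ℤ) ^ (r - n.primeFactors.card) * x n)]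
    refine Finset.sum_congr rfl fun d _ => ?_
    rw [Finset.mul_sum]
    refine Finset.sum_congr rfl fun n hn => ?_
    rw [(Finset.mem_filter.1 hn).2]
  -- basic facts about members of D
  have hmemD : ∀ n ∈ D, n ∣ m ∧ 1 ≤ n.primeFactors.card ∧ n.primeFactors.card ≤ r - 1 := by
    intro n hn
    obtain ⟨h1, h2⟩ := Finset.mem_filter.1 hn
    obtain ⟨h3, h4⟩ := Finset.mem_Icc.1 h2
    exact ⟨(Nat.mem_divisors.1 h1).1, h3, h4⟩
  -- complement facts
  have hcompl : ∀ n, n ∣ m → (m / n).primeFactors.card = r - n.primeFactors.card := by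
    intro n hn
    have hk : m = n * (m / n) := (Nat.mul_div_cancel' hn).symm
    have hco : Nat.Coprime n (m / n) := Nat.coprime_of_squarefree_mul (hk ▸ hsq)
    have hn0 : n ≠ 0 := by rintro rfl; exact hm0 (Nat.eq_zero_of_zero_dvd hn)
    have hq0 : m / n ≠ 0 := by
      intro h; rw [hk, h, mul_zero] at hm0; exact hm0 rfl
    have hcard : r = n.primeFactors.card + (m / n).primeFactors.card := by
      have hu := Nat.primeFactors_mul hn0 hq0
      rw [← hk] at hu
      rw [hr, hu, Finset.card_union_of_disjoint hco.disjoint_primeFactors]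
    omega
  have hgmem : ∀ n ∈ D, m / n ∈ D := by
    intro n hn
    obtain ⟨h1, h2, h3⟩ := hmemD n hn
    refine Finset.mem_filter.2 ⟨Nat.mem_divisors.2 ⟨Nat.div_dvd_of_dvd h1, hm0⟩, ?_⟩
    rw [hcompl n h1]
    simp only [Finset.mem_Icc]; omega
  -- Step B : 2^r divides T
  have hdvd : (2:ℤ) ^ r ∣ T := by
    rw [hTA]
    have hz : ∑ n ∈ D, ((2 ^ (r - n.primeFactors.card) * x n : ℤ) : ZMod (2 ^ r)) = 0 := by
      refine Finset.sum_involution (fun n _ => m / n) ?_ ?_ hgmem ?_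
      · intro n hn
        show ((2 ^ (r - n.primeFactors.card) * x n : ℤ) : ZMod (2 ^ r))
          + ((2 ^ (r - (m / n).primeFactors.card) * x (m / n) : ℤ) : ZMod (2 ^ r)) = 0
        obtain ⟨h1, h2, h3⟩ := hmemD n hn
        have hcd : (m / n).primeFactors.card = r - n.primeFactors.card := hcompl n h1
        obtain ⟨hx1, hx2⟩ := hx n (Finset.mem_filter.1 hn).1 h2 (by omega)
        obtain ⟨hy1, hy2⟩ := hx (m / n) (Finset.mem_filter.1 (hgmem n hn)).1
          (by rw [hcd]; omega) (by rw [hcd]; omega)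
        obtain ⟨u, hu, hxu⟩ := two_pow_fac hx1 hx2
        obtain ⟨w, hw, hyw⟩ := two_pow_fac hy1 hy2
        rw [hcd] at hyw
        have hpair : (2:ℤ) ^ r ∣ 2 ^ (r - n.primeFactors.card) * x n
            + 2 ^ (r - (m / n).primeFactors.card) * x (m / n) := by
          rw [hcd, hxu, hyw]
          obtain ⟨t, ht⟩ := hu.add_odd hw
          refine ⟨t, ?_⟩
          have p1 : (2:ℤ) ^ (r - n.primeFactors.card) * 2 ^ (n.primeFactors.card - 1)
              = 2 ^ (r - 1) := by rw [← pow_add]; congr 1; omega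
          have p2 : (2:ℤ) ^ (r - (r - n.primeFactors.card)) * 2 ^ (r - n.primeFactors.card - 1)
              = 2 ^ (r - 1) := by rw [← pow_add]; congr 1; omega
          calc (2:ℤ) ^ (r - n.primeFactors.card) * (2 ^ (n.primeFactors.card - 1) * u)
                + 2 ^ (r - (r - n.primeFactors.card)) * (2 ^ (r - n.primeFactors.card - 1) * w)
              = 2 ^ (r - 1) * (u + w) := by rw [← mul_assoc, ← mul_assoc, p1, p2]; ring
            _ = 2 ^ r * t := by
                rw [ht, show (2:ℤ) ^ r = 2 ^ (r - 1) * 2 from by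
                  rw [← pow_succ]; congr 1; omega]
                ring
        rw [← Int.cast_add, ZMod.intCast_zmod_eq_zero_iff_dvd]
        exact_mod_cast hpair
      · intro n hn _
        obtain ⟨h1, h2, h3⟩ := hmemD n hn
        intro heq
        have heq' : m / n = n := heq
        have hn1 : n ≠ 1 := by
          intro h; rw [h] at h2; simp at h2
        have hm' : m = n * n := by
          conv_lhs => rw [← Nat.mul_div_cancel' h1]
          rw [heq']
        exact hn1 (Nat.isUnit_iff.1 (hsq n (by rw [hm'])))
      · intro n hn
        exact Nat.div_div_self (hmemD n hn).1 hm0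
    have hz' : ((∑ n ∈ D, 2 ^ (r - n.primeFactors.card) * x n : ℤ) : ZMod (2 ^ r)) = 0 := by
      rw [Int.cast_sum]; exact hz
    have := (ZMod.intCast_zmod_eq_zero_iff_dvd _ (2 ^ r)).1 hz'
    exact_mod_cast this
  -- Step C : conclude
  have hA : (2:ℤ) ^ (r - 1) ∣ x m + T := by
    have := padicValInt_dvd (p := 2) (x m + T)
    rw [hval] at this; exact_mod_cast this
  have hnA : ¬ (2:ℤ) ^ r ∣ x m + T := by
    intro h
    have h' : ((2:ℕ):ℤ) ^ r ∣ x m + T := by exact_mod_cast h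
    rcases (padicValInt_dvd_iff r (x m + T)).1 h' with h | h
    · exact htot h
    · rw [hval] at h; omega
  have h1 : (2:ℤ) ^ (r - 1) ∣ x m := by
    have hxe : x m = (x m + T) - T := by ring
    rw [hxe]
    exact dvd_sub hA ((pow_dvd_pow 2 (by omega : r - 1 ≤ r)).trans hdvd)
  have h2 : ¬ (2:ℤ) ^ r ∣ x m := by
    intro h
    exact hnA (dvd_add h hdvd)
  have hxm0 : x m ≠ 0 := by
    rintro h
    exact hnA (by rw [h, zero_add]; exact hdvd)
  have hle : r - 1 ≤ padicValInt 2 (x m) := by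
    rcases (padicValInt_dvd_iff (r - 1) (x m)).1 (by exact_mod_cast h1) with h | h
    · exact absurd h hxm0
    · exact h
  have hlt : ¬ r ≤ padicValInt 2 (x m) := by
    intro h
    exact h2 (by exact_mod_cast (padicValInt_dvd_iff r (x m)).2 (Or.inr h))
  omega
end

section
/- Let q be an odd prime and d a nonzero integer with q ∤ d, and suppose there exist w, z ∈ ℚ_q with d w² = 4p − ((M/d) z² − 2u)², where M is an integer with q ∥ M (q divides M exactly once), p, u integers with q ∤ p, 4p = (2u)² + 256. If (w, z) has non-integral coordinates in ℚ_q, writing w = q^{−m}w₁, z = q^{−n}z₁ with w₁, z₁ ∈ ℤ_q^×, m, n > 0, then necessarily m = 2n − 1, and reducing modulo q yields that d·(−1) is a quadratic residue modulo q, i.e. (d/q) = (−1/q). -/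
/-!
Put `a = (M/d) z² - 2u`. As `q ∥ M/d` and `z` has valuation `-n < 0`, the term `(M/d) z²` has
valuation `1 - 2n < 0` and dominates the integer `2u`, so `a` has valuation `1 - 2n`; the integral
term `4p` cannot cancel `a²`, and comparing valuations gives `-2m = 2(1 - 2n)`, i.e. `‖w‖ = ‖a‖`.
Dividing the equation by `w²` gives `d = 4p/w² - (a/w)²` with `a/w` a `q`-adic unit and `4p/w²`
in `qℤ_q`, so `d ≡ -(a/w)²` is `-1` times a nonzero square modulo `q`.
-/

theorem isSquare_mul_sq_iff {K : Type*} [CommGroupWithZero K] {a b : K} (hb : b ≠ 0) :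
    IsSquare (a * b ^ 2) ↔ IsSquare a :=
  ⟨fun ⟨r, hr⟩ => ⟨r / b, by
      rw [div_mul_div_comm, ← hr, ← sq, mul_div_cancel_right₀ _ (pow_ne_zero 2 hb)]⟩,
    fun ha => ha.mul (IsSquare.sq b)⟩

section Ultrametric

variable {K : Type*} [NormedField K] [IsUltrametricDist K]

theorem norm_sub_eq_left_of_norm_lt {a b : K} (h : ‖b‖ < ‖a‖) : ‖a - b‖ = ‖a‖ := by
  rw [sub_eq_add_neg,
    IsUltrametricDist.norm_add_eq_max_of_norm_ne_norm (by rw [norm_neg]; exact h.ne'), norm_neg,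
    max_eq_left h.le]

theorem norm_eq_of_mul_sq_eq_sub_sq {d c w a : K} (hd : ‖d‖ = 1) (hc : ‖c‖ ≤ 1) (ha : 1 < ‖a‖)
    (h : d * w ^ 2 = c - a ^ 2) : ‖w‖ = ‖a‖ := by
  have hca : ‖c‖ < ‖a ^ 2‖ := by rw [norm_pow]; nlinarith
  have hsq : ‖w‖ ^ 2 = ‖a‖ ^ 2 := by
    rw [← norm_pow, ← norm_pow, ← one_mul ‖w ^ 2‖, ← hd, ← norm_mul, h, norm_sub_rev,
      norm_sub_eq_left_of_norm_lt hca]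
  exact (pow_left_inj₀ (norm_nonneg w) (norm_nonneg a) two_ne_zero).mp hsq

end Ultrametric

namespace Padic

variable {p : ℕ} [Fact p.Prime]

theorem norm_intCast_eq_one_of_not_dvd_s19 {a : ℤ} (h : ¬ (p : ℤ) ∣ a) : ‖(a : ℚ_[p])‖ = 1 :=
  (norm_int_le_one a).eq_of_not_lt (mt norm_intCast_lt_one_iff.mp h)

theorem norm_intCast_eq_inv_of_dvd_of_not_sq_dvd {a : ℤ} (h : (p : ℤ) ∣ a)
    (h2 : ¬ (p : ℤ) ^ 2 ∣ a) : ‖(a : ℚ_[p])‖ = (p : ℝ)⁻¹ := by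
  obtain ⟨k, rfl⟩ := h
  have hk : ¬ (p : ℤ) ∣ k := fun hk => h2 (by rw [sq]; exact mul_dvd_mul_left _ hk)
  rw [Int.cast_mul, norm_mul, Int.cast_natCast, norm_p, norm_intCast_eq_one_of_not_dvd_s19 hk, mul_one]

theorem norm_mul_sq_sub_eq_zpow {k z b : ℚ_[p]} {n : ℕ} (hk : ‖k‖ = (p : ℝ)⁻¹)
    (hz : ‖z‖ = (p : ℝ) ^ n) (hn : 0 < n) (hb : ‖b‖ ≤ 1) :
    ‖k * z ^ 2 - b‖ = (p : ℝ) ^ (2 * n - 1 : ℤ) := by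
  have hp : (1 : ℝ) < p := mod_cast (Fact.out : p.Prime).one_lt
  have hkz : ‖k * z ^ 2‖ = (p : ℝ) ^ (2 * n - 1 : ℤ) := by
    rw [norm_mul, norm_pow, hk, hz, zpow_sub₀ (by positivity), zpow_one, ← pow_mul,
      inv_mul_eq_div, mul_comm n, ← zpow_natCast, Nat.cast_mul, Nat.cast_ofNat]
  rw [norm_sub_eq_left_of_norm_lt (hkz ▸ hb.trans_lt (one_lt_zpow₀ hp (by omega))), hkz]

theorem exists_toZMod_eq_neg_sq {d : ℤ_[p]} {c w a : ℚ_[p]} (hc : ‖c‖ ≤ 1) (ha : 1 < ‖a‖)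
    (hwa : ‖w‖ = ‖a‖) (h : d * w ^ 2 = c - a ^ 2) :
    ∃ t : ZMod p, t ≠ 0 ∧ PadicInt.toZMod d = -t ^ 2 := by
  have hw1 : 1 < ‖w‖ := hwa ▸ ha
  have hw0 : w ≠ 0 := norm_pos_iff.mp (one_pos.trans hw1)
  have hta : ‖a / w‖ = 1 := by rw [norm_div, hwa, div_self (one_pos.trans ha).ne']
  have hec : ‖c / w ^ 2‖ < 1 := by
    rw [norm_div, norm_pow, div_lt_one (by positivity)]
    nlinarith
  let t : ℤ_[p] := ⟨a / w, hta.le⟩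
  let e : ℤ_[p] := ⟨c / w ^ 2, hec.le⟩
  have he : PadicInt.toZMod e = 0 := by
    change e ∈ RingHom.ker PadicInt.toZMod
    rw [PadicInt.ker_toZMod, IsLocalRing.mem_maximalIdeal, PadicInt.mem_nonunits]
    exact hec
  have ht : PadicInt.toZMod t ≠ 0 := ((PadicInt.isUnit_iff.mpr hta).map PadicInt.toZMod).ne_zero
  have hd : d = e - t ^ 2 := by
    apply Subtype.ext
    rw [PadicInt.coe_sub, PadicInt.coe_pow]
    change (d : ℚ_[p]) = c / w ^ 2 - (a / w) ^ 2
    field_simp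
    linear_combination h
  exact ⟨_, ht, by rw [hd, map_sub, map_pow, he, zero_sub]⟩

end Padic

open Padic

theorem stmt_19_general (q : ℕ) [Fact q.Prime]
    (d M u : ℤ) (hqd : ¬ ((q : ℤ) ∣ d)) (hdM : d ∣ M)
    (hqM : (q : ℤ) ∣ M) (hq2M : ¬ ((q : ℤ) ^ 2 ∣ M))
    (w z : ℚ_[q]) (m n : ℕ) (hn : 0 < n)
    (hw : w.valuation = -(m : ℤ)) (hz : z.valuation = -(n : ℤ))
    (heq : (d : ℚ_[q]) * w ^ 2 =
      4 * ((u : ℚ_[q]) ^ 2 + 64) - (((M / d : ℤ) : ℚ_[q]) * z ^ 2 - 2 * (u : ℚ_[q])) ^ 2) :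
    m = 2 * n - 1 ∧ (IsSquare ((d : ZMod q)) ↔ IsSquare ((-1 : ZMod q))) := by
  have hq1 : (1 : ℝ) < q := mod_cast (Fact.out : q.Prime).one_lt
  have hqMd : (q : ℤ) ∣ M / d :=
    ((Nat.prime_iff_prime_int.mp Fact.out).dvd_or_dvd
      (by rwa [Int.mul_ediv_cancel' hdM])).resolve_left hqd
  have hq2Md : ¬ (q : ℤ) ^ 2 ∣ M / d := fun h => hq2M (h.trans (Int.ediv_dvd_of_dvd hdM))
  have hz0 : z ≠ 0 := by rintro rfl; rw [valuation_zero] at hz; omega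
  set a := ((M / d : ℤ) : ℚ_[q]) * z ^ 2 - 2 * (u : ℚ_[q])
  have hna : ‖a‖ = (q : ℝ) ^ (2 * n - 1 : ℤ) :=
    norm_mul_sq_sub_eq_zpow (norm_intCast_eq_inv_of_dvd_of_not_sq_dvd hqMd hq2Md)
      (by rw [norm_eq_zpow_neg_valuation hz0, hz, neg_neg, zpow_natCast]) hn
      (mod_cast norm_int_le_one (p := q) (2 * u))
  have ha1 : 1 < ‖a‖ := hna ▸ one_lt_zpow₀ hq1 (by omega)
  have hc : ‖4 * ((u : ℚ_[q]) ^ 2 + 64)‖ ≤ 1 := by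
    have := norm_int_le_one (p := q) (4 * (u ^ 2 + 64))
    push_cast at this
    exact this
  have hwa : ‖w‖ = ‖a‖ :=
    norm_eq_of_mul_sq_eq_sub_sq (norm_intCast_eq_one_of_not_dvd_s19 hqd) hc ha1 heq
  have hw0 : w ≠ 0 := norm_pos_iff.mp (hwa ▸ one_pos.trans ha1)
  obtain ⟨t, ht0, hdt⟩ := exists_toZMod_eq_neg_sq (d := (d : ℤ_[q])) hc ha1 hwa
    (by rwa [PadicInt.coe_intCast])
  refine ⟨?_, ?_⟩
  · rw [norm_eq_zpow_neg_valuation hw0, hw, neg_neg, hna] at hwa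
    have hexp := zpow_right_injective₀ (by positivity) hq1.ne' hwa
    omega
  · rw [map_intCast] at hdt
    rw [hdt, neg_eq_neg_one_mul, isSquare_mul_sq_iff ht0]

/-- let `q` be an odd prime, `d` a nonzero integer with `q ∤ d`, `M` an integer
exactly divisible by `q` with `d ∣ M`, and `p = u² + 64` with `q ∤ p` (so `4p = (2u)² + 256`).
If `w, z ∈ ℚ_q` satisfy `d w² = 4p - ((M/d) z² - 2u)²` and have non-integral coordinates,
say of valuations `-m` and `-n` with `m, n > 0`, then necessarily `m = 2n - 1`, and reduction
modulo `q` shows `(d/q) = (-1/q)`, i.e. `d` is a square mod `q` iff `-1` is. -/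
theorem stmt_19 (q : ℕ) [Fact q.Prime] (hqodd : Odd q)
    (d M u : ℤ) (hd0 : d ≠ 0) (hqd : ¬ ((q : ℤ) ∣ d)) (hdM : d ∣ M)
    (hqM : (q : ℤ) ∣ M) (hq2M : ¬ ((q : ℤ) ^ 2 ∣ M)) (hqp : ¬ ((q : ℤ) ∣ (u ^ 2 + 64)))
    (w z : ℚ_[q]) (m n : ℕ) (hm : 0 < m) (hn : 0 < n)
    (hw : w.valuation = -(m : ℤ)) (hz : z.valuation = -(n : ℤ))
    (heq : (d : ℚ_[q]) * w ^ 2 =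
      4 * ((u : ℚ_[q]) ^ 2 + 64) - (((M / d : ℤ) : ℚ_[q]) * z ^ 2 - 2 * (u : ℚ_[q])) ^ 2) :
    m = 2 * n - 1 ∧ (IsSquare ((d : ZMod q)) ↔ IsSquare ((-1 : ZMod q))) :=
  stmt_19_general q d M u hqd hdM hqM hq2M w z m n hn hw hz heq
end
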